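/- Let H ∈ ℂ^{N_r×N_t} have compact SVD H = U Σ Vᴴ with U ∈ ℂ^{N_r×L}, and let Ŵ, Û ∈ ℂ^{N_r×L} be semi-unitary matrices with ‖Ŵ − Û‖_F ≤ δ₁. Define η_c(Ŵ) = tr(Ŵᴴ H Hᴴ Ŵ)/tr(Hᴴ H). Then √(η_c(Ŵ)) ≥ σ_L(Ûᴴ U) − δ₁, where σ_L denotes the L-th largest singular value. -/

import Mathlib

open Matrix

/-- The `i`-th largest singular value (0-indexed) of a complex matrix. -/
noncomputable def svalDesc {m n : ℕ} (A : Matrix (Fin m) (Fin n) ℂ) (i : Fin m) : ℝ :=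
  Real.sqrt ((Matrix.isHermitian_mul_conjTranspose_self A).eigenvalues
    (Tuple.sort ((Matrix.isHermitian_mul_conjTranspose_self A).eigenvalues) i.rev))

/-- The squared Frobenius norm. -/
noncomputable def frobSq {m n : Type*} [Fintype m] [Fintype n] (A : Matrix m n ℂ) : ℝ :=
  ∑ i, ∑ j, ‖A i j‖ ^ 2

/-!
Write `H = U Y` with `Y = Σ Vᴴ` and `M = Ûᴴ U`. Since `Uᴴ U = 1`, `‖H‖_F = ‖Y‖_F`, and
`‖Ûᴴ H‖_F = ‖M Y‖_F ≥ σ_min(M) ‖Y‖_F` because `Mᴴ M ≥ σ_min(M)² • 1` in the Loewner order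
(`σ_min(M)²` is the least eigenvalue of `M Mᴴ`, and `M Mᴴ`, `Mᴴ M` have the same characteristic
polynomial). The triangle inequality and submultiplicativity of the Frobenius norm give
`‖Ŵᴴ H‖_F ≥ ‖Ûᴴ H‖_F - ‖Ŵ - Û‖_F ‖H‖_F ≥ (σ_min(M) - δ₁) ‖H‖_F`, and
`√η_c(Ŵ) = ‖Ŵᴴ H‖_F / ‖H‖_F`.
-/

open scoped Matrix.Norms.Frobenius MatrixOrder ComplexOrder

section Frobenius

variable {𝕜 : Type*} [RCLike 𝕜] {l m n p : Type*} [Fintype l] [Fintype m] [Fintype n]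
  [Fintype p]

theorem sqrt_frobSq (A : Matrix m n ℂ) : Real.sqrt (frobSq A) = ‖A‖ := by
  simp only [frobSq, frobenius_norm_def, Real.sqrt_eq_rpow, Real.rpow_two]

theorem frobenius_norm_sq_eq_re_trace (A : Matrix m n 𝕜) :
    ‖A‖ ^ 2 = RCLike.re (Aᴴ * A).trace := by
  rw [frobenius_norm_def, ← Real.rpow_natCast, ← Real.rpow_mul (by positivity), Finset.sum_comm]
  simp only [trace, diag, mul_apply, conjTranspose_apply, map_sum, RCLike.star_def,
    RCLike.conj_mul, ← RCLike.ofReal_pow, RCLike.ofReal_re, Real.rpow_two]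
  norm_num

theorem frobenius_norm_mul_of_conjTranspose_mul_self_eq_one [DecidableEq n]
    {U : Matrix m n 𝕜} (hU : Uᴴ * U = 1) (Y : Matrix n p 𝕜) : ‖U * Y‖ = ‖Y‖ := by
  have : ‖U * Y‖ ^ 2 = ‖Y‖ ^ 2 := by
    rw [frobenius_norm_sq_eq_re_trace, frobenius_norm_sq_eq_re_trace, conjTranspose_mul,
      Matrix.mul_assoc, ← Matrix.mul_assoc Uᴴ, hU, Matrix.one_mul]
  exact (pow_left_inj₀ (norm_nonneg _) (norm_nonneg _) two_ne_zero).mp this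

theorem sqrt_re_trace_div_re_trace (W : Matrix m l ℂ) (H : Matrix m n ℂ) :
    Real.sqrt ((Wᴴ * H * Hᴴ * W).trace.re / (Hᴴ * H).trace.re) = ‖Wᴴ * H‖ / ‖H‖ := by
  have hWH : Wᴴ * H * Hᴴ * W = (Hᴴ * W)ᴴ * (Hᴴ * W) := by
    simp only [conjTranspose_mul, conjTranspose_conjTranspose, Matrix.mul_assoc]
  rw [hWH, ← RCLike.re_to_complex, ← RCLike.re_to_complex, ← frobenius_norm_sq_eq_re_trace,
    ← frobenius_norm_sq_eq_re_trace, ← div_pow, Real.sqrt_sq (by positivity),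
    ← frobenius_norm_conjTranspose (Hᴴ * W), conjTranspose_mul, conjTranspose_conjTranspose]

theorem Matrix.IsHermitian.mul_frobenius_norm_sq_le_re_trace [DecidableEq n]
    {P : Matrix n n 𝕜} (hP : P.IsHermitian) {c : ℝ} (hc : ∀ i, c ≤ hP.eigenvalues i)
    (Y : Matrix n p 𝕜) : c * ‖Y‖ ^ 2 ≤ RCLike.re (Yᴴ * P * Y).trace := by
  have hle : algebraMap ℝ _ c ≤ P := by
    rw [algebraMap_le_iff_le_spectrum (R := ℝ) hP.isSelfAdjoint,
      hP.spectrum_real_eq_range_eigenvalues]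
    rintro _ ⟨i, rfl⟩
    exact hc i
  have htrace :=
    (RCLike.nonneg_iff.mp ((le_iff.mp hle).conjTranspose_mul_mul_same Y).trace_nonneg).1
  rw [frobenius_norm_sq_eq_re_trace]
  simpa [Matrix.mul_sub, Matrix.sub_mul, trace_sub, Algebra.algebraMap_eq_smul_one,
    trace_smul, RCLike.smul_re] using htrace

end Frobenius

theorem Matrix.eigenvalues_conjTranspose_mul_self_eq {𝕜 : Type*} [RCLike 𝕜] {n : Type*}
    [Fintype n] [DecidableEq n] (M : Matrix n n 𝕜) :
    (isHermitian_conjTranspose_mul_self M).eigenvalues =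
      (isHermitian_mul_conjTranspose_self M).eigenvalues :=
  (IsHermitian.eigenvalues_eq_eigenvalues_iff _ _).mpr (charpoly_mul_comm _ _)

theorem svalDesc_last_sq_le_eigenvalues {m n : ℕ} (hm : 0 < m) (A : Matrix (Fin m) (Fin n) ℂ)
    (i : Fin m) :
    svalDesc A ⟨m - 1, Nat.sub_lt hm Nat.one_pos⟩ ^ 2 ≤
      (isHermitian_mul_conjTranspose_self A).eigenvalues i := by
  set ev := (isHermitian_mul_conjTranspose_self A).eigenvalues
  have hrev : (⟨m - 1, Nat.sub_lt hm Nat.one_pos⟩ : Fin m).rev = ⟨0, hm⟩ := by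
    ext; simp [Fin.rev]; omega
  obtain ⟨k, rfl⟩ := (Tuple.sort ev).surjective i
  rw [svalDesc, hrev, Real.sq_sqrt (eigenvalues_self_mul_conjTranspose_nonneg A _)]
  exact Tuple.monotone_sort ev (Fin.mk_le_of_le_val (Nat.zero_le _))

theorem svalDesc_last_mul_norm_le_norm_mul {L : ℕ} (hL : 0 < L) {p : Type*} [Fintype p]
    (M : Matrix (Fin L) (Fin L) ℂ) (Y : Matrix (Fin L) p ℂ) :
    svalDesc M ⟨L - 1, Nat.sub_lt hL Nat.one_pos⟩ * ‖Y‖ ≤ ‖M * Y‖ := by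
  have hsq := (isHermitian_conjTranspose_mul_self M).mul_frobenius_norm_sq_le_re_trace
    (fun i => eigenvalues_conjTranspose_mul_self_eq M ▸ svalDesc_last_sq_le_eigenvalues hL M i) Y
  have hMY : Yᴴ * (Mᴴ * M) * Y = (M * Y)ᴴ * (M * Y) := by
    simp only [conjTranspose_mul, Matrix.mul_assoc]
  rw [hMY, ← frobenius_norm_sq_eq_re_trace, ← mul_pow] at hsq
  exact (pow_le_pow_iff_left₀ (mul_nonneg (Real.sqrt_nonneg _) (norm_nonneg _))
    (norm_nonneg _) two_ne_zero).mp hsq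

/-- Column subspace accuracy bound: if `H = U Σ Vᴴ` is a compact SVD and `Ŵ, Û` are
semi-unitary with `‖Ŵ − Û‖_F ≤ δ₁`, then `√(η_c(Ŵ)) ≥ σ_L(Ûᴴ U) − δ₁`. -/
theorem column_subspace_accuracy_bound {Nr Nt L : ℕ} (hL : 0 < L)
    (H : Matrix (Fin Nr) (Fin Nt) ℂ)
    (U : Matrix (Fin Nr) (Fin L) ℂ) (s : Fin L → ℝ) (V : Matrix (Fin Nt) (Fin L) ℂ)
    (hU : Uᴴ * U = 1) (hV : Vᴴ * V = 1) (hs : ∀ i, 0 < s i)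
    (hSVD : H = U * Matrix.diagonal (fun i => (s i : ℂ)) * Vᴴ)
    (What Uhat : Matrix (Fin Nr) (Fin L) ℂ)
    (δ1 : ℝ) (hδ : Real.sqrt (frobSq (What - Uhat)) ≤ δ1) :
    Real.sqrt ((Matrix.trace (Whatᴴ * H * Hᴴ * What)).re / (Matrix.trace (Hᴴ * H)).re)
      ≥ svalDesc (Uhatᴴ * U) ⟨L - 1, by omega⟩ - δ1 := by
  set Y := Matrix.diagonal (fun i => (s i : ℂ)) * Vᴴ
  have hHY : H = U * Y := by rw [hSVD, Matrix.mul_assoc]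
  have hH : 0 < ‖H‖ := by
    have hdiag : Uᴴ * H * V = Matrix.diagonal (fun i => (s i : ℂ)) := by
      rw [hSVD, ← Matrix.mul_assoc Uᴴ, ← Matrix.mul_assoc Uᴴ, hU, Matrix.one_mul,
        Matrix.mul_assoc, hV, Matrix.mul_one]
    refine norm_pos_iff.mpr fun h0 => (hs ⟨0, hL⟩).ne' ?_
    simpa [h0] using (congr_fun₂ hdiag ⟨0, hL⟩ ⟨0, hL⟩).symm
  have hlower :
      svalDesc (Uhatᴴ * U) ⟨L - 1, Nat.sub_lt hL Nat.one_pos⟩ * ‖H‖ ≤ ‖Uhatᴴ * H‖ := by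
    rw [hHY, frobenius_norm_mul_of_conjTranspose_mul_self_eq_one hU, ← Matrix.mul_assoc]
    exact svalDesc_last_mul_norm_le_norm_mul hL _ Y
  have hupper : ‖Uhatᴴ * H‖ ≤ ‖Whatᴴ * H‖ + δ1 * ‖H‖ := by
    have herr : ‖(What - Uhat)ᴴ * H‖ ≤ δ1 * ‖H‖ := by
      refine (frobenius_norm_mul _ _).trans (mul_le_mul_of_nonneg_right ?_ hH.le)
      rwa [frobenius_norm_conjTranspose, ← sqrt_frobSq]
    calc ‖Uhatᴴ * H‖ = ‖Whatᴴ * H - (What - Uhat)ᴴ * H‖ := by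
          rw [conjTranspose_sub, Matrix.sub_mul, sub_sub_cancel]
      _ ≤ ‖Whatᴴ * H‖ + ‖(What - Uhat)ᴴ * H‖ := norm_sub_le _ _
      _ ≤ ‖Whatᴴ * H‖ + δ1 * ‖H‖ := by gcongr
  rw [sqrt_re_trace_div_re_trace, ge_iff_le, le_div_iff₀ hH]
  linarith
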